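/- The classes of vectors of norms 2/5, 4/5, 6/5, 8/5 and 2, together with the zero element, form a complete representative system of the discriminant group D of A_4^∨(5): for every x ∈ (1/5)A_4 with x ∉ A_4^∨, there exists a ∈ A_4 with ⟨a,a⟩ ∈ {2, 4, 6, 8, 10} such that x − a/5 ∈ A_4^∨. -/

import Mathlib

/-!
Among the vectors `a ∈ A₄` with `x - a/5 ∈ A₄^∨`, take one of least norm. Comparing it with
`a - 5w` for the vectors `w = 1_S - (|S|/5)·𝟙` of `A₄^∨` (the Voronoi-relevant ones) gives
`2 ∑_{i ∈ S} aᵢ ≤ |S| (5 - |S|)` for every `S ⊆ {1, …, 5}`: `a` lies in the permutohedron with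
vertices the permutations of `(2, 1, 0, -1, -2)`. An integer vector there has entries in
`[-2, 2]`, at most one entry `2` and at most one entry `-2`, so its norm is at most `11`, hence at
most `10` because `A₄` is even. It is nonzero because `x ∉ A₄^∨`.
-/

open scoped BigOperators

noncomputable section

/-- The standard bilinear form `⟨x,y⟩ = ∑ xᵢ yᵢ` on `ℚ^5`. -/
def form (x y : Fin 5 → ℚ) : ℚ := ∑ i, x i * y i

/-- The root lattice `A₄ = {a ∈ ℤ^5 : a₁ + ⋯ + a₅ = 0}` inside `ℚ^5`. -/
def A4 : AddSubgroup (Fin 5 → ℚ) where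
  carrier := {a | (∀ i, ∃ n : ℤ, a i = (n : ℚ)) ∧ ∑ i, a i = 0}
  zero_mem' := ⟨fun _ => ⟨0, by simp⟩, by simp⟩
  add_mem' := by
    rintro a b ⟨ha, ha0⟩ ⟨hb, hb0⟩
    constructor
    · intro i
      obtain ⟨n, hn⟩ := ha i
      obtain ⟨m, hm⟩ := hb i
      exact ⟨n + m, by push_cast [Pi.add_apply, hn, hm]; ring⟩
    · simp [Pi.add_apply, Finset.sum_add_distrib, ha0, hb0]
  neg_mem' := by
    rintro a ⟨ha, ha0⟩
    constructor
    · intro i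
      obtain ⟨n, hn⟩ := ha i
      exact ⟨-n, by push_cast [Pi.neg_apply, hn]; ring⟩
    · simp [Pi.neg_apply, Finset.sum_neg_distrib, ha0]

/-- The fundamental weight `w₁ = (4,-1,-1,-1,-1)/5` of `A₄`. -/
def w1 : Fin 5 → ℚ := ![4/5, -1/5, -1/5, -1/5, -1/5]
/-- The fundamental weight `w₂ = (3,3,-2,-2,-2)/5` of `A₄`. -/
def w2 : Fin 5 → ℚ := ![3/5, 3/5, -2/5, -2/5, -2/5]
/-- The fundamental weight `w₃ = (2,2,2,-3,-3)/5` of `A₄`. -/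
def w3 : Fin 5 → ℚ := ![2/5, 2/5, 2/5, -3/5, -3/5]
/-- The fundamental weight `w₄ = (1,1,1,1,-4)/5` of `A₄`. -/
def w4 : Fin 5 → ℚ := ![1/5, 1/5, 1/5, 1/5, -4/5]

/-- The weight lattice `A₄^∨ = ℤw₁ + ℤw₂ + ℤw₃ + ℤw₄`.  The rescaled lattice `A₄^∨(5)`
is this group equipped with the bilinear form `5⟨·,·⟩`. -/
def A4dual : AddSubgroup (Fin 5 → ℚ) := AddSubgroup.closure {w1, w2, w3, w4}

/-- The dual lattice `(1/5)A₄ = {a/5 : a ∈ A₄}` of `A₄^∨(5)`. -/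
def fifthA4 : AddSubgroup (Fin 5 → ℚ) :=
  A4.map (DistribMulAction.toAddMonoidHom (Fin 5 → ℚ) ((5 : ℚ)⁻¹))

/-- The hyperplane `V = {x ∈ ℚ^5 : x₁ + ⋯ + x₅ = 0}`. -/
def V0 : Submodule ℚ (Fin 5 → ℚ) where
  carrier := {x | ∑ i, x i = 0}
  zero_mem' := by simp
  add_mem' := by
    intro a b ha hb
    simp only [Set.mem_setOf_eq] at *
    simp [Pi.add_apply, Finset.sum_add_distrib, ha, hb]
  smul_mem' := by
    intro c a ha
    simp only [Set.mem_setOf_eq] at *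
    simp [Pi.smul_apply, ← Finset.mul_sum, ha]

/-- The discriminant group `D = ((1/5)A₄)/A₄^∨` of the lattice `A₄^∨(5)`. -/
abbrev Disc := fifthA4 ⧸ (A4dual.addSubgroupOf fifthA4)

open Finset

lemma form_intCast_self (n : Fin 5 → ℤ) :
    form (fun i => (n i : ℚ)) (fun i => (n i : ℚ)) = ((∑ i, n i ^ 2 : ℤ) : ℚ) := by
  simp only [form, ← sq]
  push_cast
  rfl

lemma mem_A4_iff {a : Fin 5 → ℚ} :
    a ∈ A4 ↔ ∃ n : Fin 5 → ℤ, ∑ i, n i = 0 ∧ a = fun i => (n i : ℚ) := by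
  constructor
  · rintro ⟨hint, hsum⟩
    choose n hn using hint
    refine ⟨n, ?_, funext hn⟩
    exact_mod_cast (by simpa only [hn] using hsum : ∑ i, (n i : ℚ) = 0)
  · rintro ⟨n, hn, rfl⟩
    exact ⟨fun i => ⟨n i, rfl⟩, show ∑ i, (n i : ℚ) = 0 by exact_mod_cast hn⟩

lemma even_sum_sq_of_sum_eq_zero {n : Fin 5 → ℤ} (hn : ∑ i, n i = 0) : Even (∑ i, n i ^ 2) := by
  have : ∑ i, n i ^ 2 = ∑ i, n i * (n i - 1) := by
    simp [mul_sub, sum_sub_distrib, hn, sq]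
  rw [this]
  exact even_sum _ fun i _ => Int.even_mul_pred_self (n i)

lemma exists_form_self_eq_two_mul {a : Fin 5 → ℚ} (ha : a ∈ A4) : ∃ k : ℕ, form a a = 2 * k := by
  obtain ⟨n, hn, rfl⟩ := mem_A4_iff.1 ha
  obtain ⟨r, hr⟩ := even_sum_sq_of_sum_eq_zero hn
  have : 0 ≤ r := by nlinarith [sum_nonneg fun i (_ : i ∈ univ) => sq_nonneg (n i)]
  lift r to ℕ using this
  refine ⟨r, ?_⟩
  rw [form_intCast_self, hr]
  push_cast
  ring

lemma mem_A4dual_of_sum_eq_zero {v : Fin 5 → ℚ} (hv : ∑ i, v i = 0)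
    (hint : ∀ i j, ∃ m : ℤ, v i - v j = m) : v ∈ A4dual := by
  choose m hm using hint
  have hv' : v = m 0 1 • w1 + m 1 2 • w2 + m 2 3 • w3 + m 3 4 • w4 := by
    rw [Fin.sum_univ_five] at hv
    ext i
    fin_cases i <;> simp [w1, w2, w3, w4, ← hm] <;> linarith
  have hw : ∀ w ∈ ({w1, w2, w3, w4} : Set (Fin 5 → ℚ)), w ∈ A4dual :=
    fun w hw => AddSubgroup.subset_closure hw
  rw [hv']
  refine add_mem (add_mem (add_mem ?_ ?_) ?_) ?_ <;> exact zsmul_mem (hw _ (by simp)) _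

lemma five_smul_mem_A4 {w : Fin 5 → ℚ} (hw : w ∈ A4dual) : (5 : ℚ) • w ∈ A4 := by
  suffices A4dual ≤ A4.comap (DistribSMul.toAddMonoidHom _ (5 : ℚ)) from this hw
  refine (AddSubgroup.closure_le _).2 fun v hv => ⟨fun i => ⟨⌊(5 : ℚ) * v i⌋, ?_⟩, ?_⟩
  · fin_cases i <;> rcases hv with rfl | rfl | rfl | rfl <;> norm_num [w1, w2, w3, w4]
  · rcases hv with rfl | rfl | rfl | rfl <;> simp [Fin.sum_univ_five, w1, w2, w3, w4] <;> norm_num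

def projIndicator (s : Finset (Fin 5)) : Fin 5 → ℚ := fun i => (if i ∈ s then 1 else 0) - #s / 5

lemma projIndicator_mem_A4dual (s : Finset (Fin 5)) : projIndicator s ∈ A4dual := by
  refine mem_A4dual_of_sum_eq_zero ?_ fun i j =>
    ⟨(if i ∈ s then 1 else 0) - (if j ∈ s then 1 else 0), ?_⟩
  · simp only [projIndicator, sum_sub_distrib, sum_ite_mem, univ_inter, sum_const, nsmul_eq_mul,
      mul_one, card_univ, Fintype.card_fin, Nat.cast_ofNat]
    ring
  · simp only [projIndicator]
    push_cast
    ring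

lemma form_projIndicator {a : Fin 5 → ℚ} (ha : ∑ i, a i = 0) (s : Finset (Fin 5)) :
    form a (projIndicator s) = ∑ i ∈ s, a i := by
  simp [form, projIndicator, mul_sub, sum_sub_distrib, ← sum_mul, ha]

lemma form_projIndicator_self (s : Finset (Fin 5)) :
    form (projIndicator s) (projIndicator s) = #s * (5 - #s) / 5 := by
  have hsq : ∀ i, projIndicator s i * projIndicator s i =
      (if i ∈ s then 1 else 0) * (1 - 2 * #s / 5) + (#s / 5 : ℚ) ^ 2 := by
    intro i
    simp only [projIndicator]
    split_ifs <;> ring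
  simp only [form, hsq, sum_add_distrib, ← sum_mul, sum_boole, subset_univ,
    filter_mem_eq_of_subset, sum_const, card_univ, Fintype.card_fin, nsmul_eq_mul, Nat.cast_ofNat]
  ring

lemma form_sub_smul_self (a w : Fin 5 → ℚ) (c : ℚ) :
    form (a - c • w) (a - c • w) = form a a - 2 * c * form a w + c ^ 2 * form w w := by
  simp only [form, Fin.sum_univ_five, Pi.sub_apply, Pi.smul_apply, smul_eq_mul]
  ring

lemma exists_isMinOn_of_eq_natCast {α : Type*} {f : α → ℚ} {S : Set α} (hS : S.Nonempty)
    (hf : ∀ a ∈ S, ∃ k : ℕ, f a = k) : ∃ a ∈ S, IsMinOn f S a := by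
  classical
  have hex : ∃ k : ℕ, ∃ a ∈ S, f a = k := by
    obtain ⟨a, ha⟩ := hS
    obtain ⟨k, hk⟩ := hf a ha
    exact ⟨k, a, ha, hk⟩
  obtain ⟨a, ha, hfa⟩ := Nat.find_spec hex
  refine ⟨a, ha, isMinOn_iff.2 fun b hb => ?_⟩
  obtain ⟨k, hk⟩ := hf b hb
  rw [hfa, hk]
  exact_mod_cast Nat.find_min' hex ⟨b, hb, hk⟩

lemma two_mul_form_le_of_isMinOn {S : Set (Fin 5 → ℚ)} {a w : Fin 5 → ℚ} {c : ℚ} (hc : 0 < c)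
    (hmin : IsMinOn (fun b => form b b) S a) (hw : a - c • w ∈ S) :
    2 * form a w ≤ c * form w w := by
  have h := isMinOn_iff.1 hmin _ hw
  rw [form_sub_smul_self] at h
  refine le_of_mul_le_mul_left ?_ hc
  linarith

section Permutohedron

variable {n : Fin 5 → ℤ}

lemma sum_neg_le_of_forall_sum_le (hn : ∑ i, n i = 0)
    (hcell : ∀ s : Finset (Fin 5), 2 * ∑ i ∈ s, n i ≤ #s * (5 - #s)) (s : Finset (Fin 5)) :
    2 * ∑ i ∈ s, -n i ≤ #s * (5 - #s) := by
  have h := hcell sᶜ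
  have hsplit := sum_compl_add_sum s n
  have hs : #s ≤ 5 := card_le_univ s
  rw [card_compl, Fintype.card_fin] at h
  push_cast [Nat.cast_sub hs] at h
  rw [sum_neg_distrib]
  linarith

lemma card_filter_eq_two_le_one (hcell : ∀ s : Finset (Fin 5), 2 * ∑ i ∈ s, n i ≤ #s * (5 - #s)) :
    #{i | n i = 2} ≤ 1 := by
  refine card_le_one.2 fun i hi j hj => by_contra fun hij => ?_
  rw [mem_filter] at hi hj
  have h := hcell {i, j}
  rw [sum_pair hij, card_pair hij, hi.2, hj.2] at h
  norm_num at h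

lemma abs_le_two_of_forall_sum_le (hn : ∑ i, n i = 0)
    (hcell : ∀ s : Finset (Fin 5), 2 * ∑ i ∈ s, n i ≤ #s * (5 - #s)) (i : Fin 5) : |n i| ≤ 2 := by
  have h₁ := hcell {i}
  have h₂ := sum_neg_le_of_forall_sum_le hn hcell {i}
  simp only [sum_singleton, card_singleton, Nat.cast_one] at h₁ h₂
  rw [abs_le]
  constructor <;> linarith

lemma sum_sq_le_ten (hn : ∑ i, n i = 0)
    (hcell : ∀ s : Finset (Fin 5), 2 * ∑ i ∈ s, n i ≤ #s * (5 - #s)) : ∑ i, n i ^ 2 ≤ 10 := by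
  have hpt : ∀ i,
      n i ^ 2 ≤ 1 + 3 * (if n i = 2 then 1 else 0) + 3 * (if -n i = 2 then 1 else 0) := by
    intro i
    obtain ⟨hlo, hhi⟩ := abs_le.1 (abs_le_two_of_forall_sum_le hn hcell i)
    interval_cases n i <;> norm_num
  have hneg : ∀ s : Finset (Fin 5), 2 * ∑ i ∈ s, (-n) i ≤ #s * (5 - #s) :=
    sum_neg_le_of_forall_sum_le hn hcell
  have h₂ := card_filter_eq_two_le_one hcell
  have hneg₂ := card_filter_eq_two_le_one hneg
  simp only [Pi.neg_apply] at hneg₂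
  have hle : ∑ i, n i ^ 2 ≤ 11 := calc
    ∑ i, n i ^ 2
      ≤ ∑ i, (1 + 3 * (if n i = 2 then 1 else 0) + 3 * (if -n i = 2 then 1 else 0)) :=
        sum_le_sum fun i _ => hpt i
    _ = 5 + 3 * #{i | n i = 2} + 3 * #{i | -n i = 2} := by
        simp only [sum_add_distrib, ← mul_sum, sum_boole, sum_const, card_univ, Fintype.card_fin]
        norm_num
    _ ≤ 11 := by omega
  obtain ⟨r, hr⟩ := even_sum_sq_of_sum_eq_zero hn
  omega

end Permutohedron

lemma form_self_mem_of_forall_sum_le {a : Fin 5 → ℚ} (ha : a ∈ A4) (ha0 : a ≠ 0)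
    (hcell : ∀ s : Finset (Fin 5), 2 * ∑ i ∈ s, a i ≤ #s * (5 - #s)) :
    form a a ∈ ({2, 4, 6, 8, 10} : Set ℚ) := by
  obtain ⟨k, hk⟩ := exists_form_self_eq_two_mul ha
  obtain ⟨n, hn, rfl⟩ := mem_A4_iff.1 ha
  rw [form_intCast_self] at hk
  have hk' : ∑ i, n i ^ 2 = 2 * k := by exact_mod_cast hk
  have hle : ∑ i, n i ^ 2 ≤ 10 := sum_sq_le_ten hn fun s =>
    (Int.cast_le (R := ℚ)).1 (by push_cast; exact hcell s)
  have hk0 : k ≠ 0 := by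
    rintro rfl
    have h0 := (sum_eq_zero_iff_of_nonneg fun i _ => sq_nonneg (n i)).1 (by simpa using hk')
    exact ha0 (funext fun i => by simpa using h0 i (mem_univ i))
  have hk1 : 1 ≤ k := Nat.one_le_iff_ne_zero.2 hk0
  have hk5 : k ≤ 5 := by omega
  rw [form_intCast_self, hk]
  interval_cases k <;> norm_num

/-- The classes of vectors of norms `2/5, 4/5, 6/5, 8/5, 2`, together
with the zero element, form a complete representative system of the discriminant group
of `A₄^∨(5)`. -/
theorem standard_system_complete :
    ∀ x ∈ fifthA4, x ∉ A4dual →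
      ∃ a ∈ A4, form a a ∈ ({2, 4, 6, 8, 10} : Set ℚ) ∧ x - (5 : ℚ)⁻¹ • a ∈ A4dual := by
  rintro _ ⟨b, hb, rfl⟩ hx
  rw [DistribMulAction.toAddMonoidHom_apply] at hx ⊢
  set S : Set (Fin 5 → ℚ) := {a | a ∈ A4 ∧ (5 : ℚ)⁻¹ • b - (5 : ℚ)⁻¹ • a ∈ A4dual}
  have hS : ∀ a ∈ S, ∀ w ∈ A4dual, a - (5 : ℚ) • w ∈ S := by
    rintro a ⟨ha, hab⟩ w hw
    refine ⟨sub_mem ha (five_smul_mem_A4 hw), ?_⟩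
    convert add_mem hab hw using 1
    module
  obtain ⟨a, ⟨ha, hab⟩, hmin⟩ := exists_isMinOn_of_eq_natCast (f := fun a => form a a)
    (⟨b, hb, by simp⟩ : S.Nonempty) fun a ha => by
      obtain ⟨k, hk⟩ := exists_form_self_eq_two_mul ha.1
      exact ⟨2 * k, by push_cast; exact hk⟩
  have ha0 : a ≠ 0 := by
    rintro rfl
    exact hx (by simpa using hab)
  refine ⟨a, ha, form_self_mem_of_forall_sum_le ha ha0 fun s => ?_, hab⟩
  have h := two_mul_form_le_of_isMinOn (by norm_num) hmin
    (hS a ⟨ha, hab⟩ _ (projIndicator_mem_A4dual s))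
  rw [form_projIndicator ha.2, form_projIndicator_self] at h
  linarith
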